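/- arXiv:1403.5111 — 3 statements merged into one kernel-verified Lean document; each statement's English description precedes it below -/
import Mathlib

section
/- First SAT encoding correctness for k = 2: Let G = (N, E) with N = {1,…,n}, and for each node i let x_i be a Boolean variable. Define the hard formula C_H consisting, for every non-adjacent pair i < j, of the clause containing literals ¬x_i, ¬x_j, and x_r for every common neighbor r of i and j. Then a truth assignment t satisfies C_H if and only if the set S = { i : t(x_i) = 1 } is a 2-club of G. -/
/-- `S` is a `k`-club of `G`: every pair of distinct nodes of `S` is connected
in the subgraph induced by `S` (i.e. by a walk all of whose vertices lie in `S`)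
by a path with at most `k` edges. -/
def IsKClub {V : Type*} (G : SimpleGraph V) (k : ℕ) (S : Set V) : Prop :=
  ∀ i ∈ S, ∀ j ∈ S, i ≠ j →
    ∃ w : G.Walk i j, w.length ≤ k ∧ ∀ v ∈ w.support, v ∈ S

/-- The `k`-club number `ω_k(G)`: the maximum cardinality of a `k`-club of `G`. -/
noncomputable def clubNumber {V : Type*} [Fintype V] (G : SimpleGraph V) (k : ℕ) : ℕ :=
  sSup {n | ∃ S : Finset V, IsKClub G k ↑S ∧ S.card = n}

/-- Correctness of the first SAT encoding for `k = 2`: an assignment `t`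
satisfies the hard formula `C_H` (one clause `{¬x_i, ¬x_j} ∪ {x_r : r common
neighbor of i and j}` per non-adjacent pair `i ≠ j`) iff the set of nodes set
to true is a 2-club of `G`. -/
theorem stmt_7 {V : Type*} (G : SimpleGraph V) (t : V → Bool) :
    (∀ i j : V, i ≠ j → ¬ G.Adj i j →
        (t i = false ∨ t j = false ∨ ∃ r : V, G.Adj i r ∧ G.Adj r j ∧ t r = true)) ↔
      IsKClub G 2 {i | t i = true} := by

  constructor
  · intro h i hi j hj hij
    by_cases hadj : G.Adj i j
    · exact ⟨SimpleGraph.Walk.cons hadj SimpleGraph.Walk.nil, by simp, by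
        intro v hv
        simp [SimpleGraph.Walk.support] at hv
        rcases hv with rfl | rfl <;> assumption⟩
    · rcases h i j hij hadj with h1 | h1 | ⟨r, hir, hrj, hr⟩
      · simp_all [Set.mem_setOf_eq]
      · simp_all [Set.mem_setOf_eq]
      · refine ⟨SimpleGraph.Walk.cons hir (SimpleGraph.Walk.cons hrj SimpleGraph.Walk.nil), by simp, ?_⟩
        intro v hv
        simp [SimpleGraph.Walk.support] at hv
        rcases hv with rfl | rfl | rfl <;> assumption
  · intro h i j hij hadj
    by_cases hi : t i = true
    swap
    · exact Or.inl (by simpa using hi)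
    by_cases hj : t j = true
    swap
    · exact Or.inr (Or.inl (by simpa using hj))
    obtain ⟨w, hlen, hsup⟩ := h i hi j hj hij
    refine Or.inr (Or.inr ?_)
    match w, hlen with
    | SimpleGraph.Walk.nil, _ => exact absurd rfl hij
    | SimpleGraph.Walk.cons h1 SimpleGraph.Walk.nil, _ => exact absurd h1 hadj
    | SimpleGraph.Walk.cons (v := r) h1 (SimpleGraph.Walk.cons h2 SimpleGraph.Walk.nil), _ =>
        exact ⟨r, h1, h2, hsup r (by simp [SimpleGraph.Walk.support])⟩
end

section
/- Optimality of the PARTIAL MAX-SAT formulation for k = 2: With the hard formula C_H as above (one clause {¬x_i, ¬x_j} ∪ { x_r : r adjacent to both i and j } for each non-adjacent pair i, j) and soft formula C_S = { {x_1}, …, {x_n} }, the maximum over all assignments t satisfying C_H of the number of soft clauses satisfied by t equals ω_2(G), the maximum cardinality of a 2-club of G. -/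
/-- Optimality of the PARTIAL MAX-SAT formulation for `k = 2`: the maximum,
over assignments satisfying the hard formula `C_H`, of the number of satisfied
soft unit clauses `{x_i}` equals `ω_2(G)`. -/
theorem stmt_8 {V : Type*} [Fintype V] [DecidableEq V] (G : SimpleGraph V) :
    sSup {n | ∃ t : V → Bool,
        (∀ i j : V, i ≠ j → ¬ G.Adj i j →
          (t i = false ∨ t j = false ∨
            ∃ r : V, G.Adj i r ∧ G.Adj r j ∧ t r = true)) ∧
        (Finset.univ.filter fun i => t i = true).card = n} =
      clubNumber G 2 := by
  unfold clubNumber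
  congr 1
  ext n
  constructor
  · rintro ⟨t, ht, hn⟩
    refine ⟨Finset.univ.filter fun i => t i = true, ?_, hn⟩
    intro i hi j hj hij
    simp only [Finset.coe_filter, Set.mem_setOf_eq, Finset.mem_univ, true_and] at hi hj
    by_cases hadj : G.Adj i j
    · refine ⟨hadj.toWalk, by simp, ?_⟩
      intro v hv
      simp only [SimpleGraph.Adj.toWalk, SimpleGraph.Walk.support_cons,
        SimpleGraph.Walk.support_nil, List.mem_cons, List.mem_singleton] at hv
      rcases hv with rfl | hv
      · simp [hi]
      · simp at hv; subst hv; simp [hj]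
    · rcases ht i j hij hadj with h | h | ⟨r, hir, hrj, htr⟩
      · rw [hi] at h; exact absurd h (by simp)
      · rw [hj] at h; exact absurd h (by simp)
      · refine ⟨SimpleGraph.Walk.cons hir (SimpleGraph.Walk.cons hrj SimpleGraph.Walk.nil),
          by simp, ?_⟩
        intro v hv
        simp only [SimpleGraph.Walk.support_cons, SimpleGraph.Walk.support_nil,
          List.mem_cons, List.mem_singleton] at hv
        rcases hv with rfl | rfl | hv
        · simp [hi]
        · simp [htr]
        · simp at hv; subst hv; simp [hj]
  · rintro ⟨S, hS, hn⟩
    refine ⟨fun i => decide (i ∈ S), ?_, ?_⟩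
    · intro i j hij hadj
      by_cases hi : i ∈ S
      · by_cases hj : j ∈ S
        · right; right
          obtain ⟨w, hlen, hsup⟩ := hS i hi j hj hij
          cases w with
          | nil => exact absurd rfl hij
          | cons h p =>
            rename_i b
            cases p with
            | nil => exact absurd h hadj
            | cons h' q =>
              rename_i c
              have hq : q.length = 0 := by
                simp only [SimpleGraph.Walk.length_cons] at hlen; omega
              have hc : c = j := q.eq_of_length_eq_zero hq
              subst hc
              refine ⟨b, h, h', by
                simpa using hsup b (by simp [SimpleGraph.Walk.support_cons])⟩
        · right; left; simp [hj]
      · left; simp [hi]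
    · rw [← hn]
      congr 1
      ext i
      simp
end

section
/- For the first encoding with k = 3: given distinct non-adjacent nodes i, j, the clause C_{ij} = {¬x_i, ¬x_j} ∪ {x_r : r is a common neighbor of i and j} ∪ {y_{r_1 r_2} : i–r_1, r_1–r_2, r_2–j are edges, r_1, r_2 ∉ {i,j}, r_1 ≠ r_2}, together with the defining clauses y_{r_1 r_2} ↔ x_{r_1} ∧ x_{r_2}, is satisfied by an assignment t with t(x_i) = t(x_j) = 1 if and only if the set S = {v : t(x_v) = 1} contains an i–j path of length at most 3 in G[S]. -/
/-!
The clause only lists the shapes an `i`–`j` walk with at most three edges can take: for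
`i ≠ j` non-adjacent it must be `i r j` or `i r₁ r₂ j`, and non-adjacency of `i, j`
forces the four vertices of the latter to be pairwise distinct.
-/

namespace SimpleGraph

variable {V : Type*} {G : SimpleGraph V} {i j r₁ r₂ : V}

theorem exists_walk_length_le_three_support_iff (P : V → Prop) :
    (∃ w : G.Walk i j, w.length ≤ 3 ∧ ∀ v ∈ w.support, P v) ↔
      P i ∧ P j ∧ (i = j ∨ G.Adj i j ∨ (∃ r, G.Adj i r ∧ G.Adj r j ∧ P r) ∨
        ∃ r₁ r₂, G.Adj i r₁ ∧ G.Adj r₁ r₂ ∧ G.Adj r₂ j ∧ P r₁ ∧ P r₂) := by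
  constructor
  · rintro ⟨w, hlen, hP⟩
    refine ⟨hP i w.start_mem_support, hP j w.end_mem_support, ?_⟩
    match w, hlen with
    | .nil, _ => exact .inl rfl
    | .cons h .nil, _ => exact .inr (.inl h)
    | .cons h₁ (.cons h₂ .nil), _ => exact .inr (.inr (.inl ⟨_, h₁, h₂, hP _ (by simp)⟩))
    | .cons h₁ (.cons h₂ (.cons h₃ .nil)), _ =>
      exact .inr (.inr (.inr ⟨_, _, h₁, h₂, h₃, hP _ (by simp), hP _ (by simp)⟩))
    | .cons _ (.cons _ (.cons _ (.cons _ _))), hlen => simp at hlen; omega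
  · rintro ⟨hi, hj, rfl | h | ⟨r, h₁, h₂, hr⟩ | ⟨r₁, r₂, h₁, h₂, h₃, hr₁, hr₂⟩⟩
    · exact ⟨.nil, by simp, by simpa using hi⟩
    · exact ⟨h.toWalk, by simp, by simp [hi, hj]⟩
    · exact ⟨.cons h₁ (.cons h₂ .nil), by simp, by simp [hi, hj, hr]⟩
    · exact ⟨.cons h₁ (.cons h₂ (.cons h₃ .nil)), by simp, by simp [hi, hj, hr₁, hr₂]⟩

theorem pairwise_ne_of_adj_adj_adj_of_not_adj (hij : ¬G.Adj i j) (h₁ : G.Adj i r₁)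
    (h₂ : G.Adj r₁ r₂) (h₃ : G.Adj r₂ j) :
    r₁ ≠ r₂ ∧ r₁ ≠ i ∧ r₁ ≠ j ∧ r₂ ≠ i ∧ r₂ ≠ j :=
  ⟨h₂.ne, h₁.ne', by rintro rfl; exact hij h₁, by rintro rfl; exact hij h₃, h₃.ne⟩

end SimpleGraph

open SimpleGraph in
/-- First encoding with `k = 3`: for distinct non-adjacent nodes `i, j` both
set to true, and auxiliary variables `y r₁ r₂` constrained (via the defining
clauses) to equal `x_{r₁} ∧ x_{r₂}`, the clause `C_{ij}` is satisfied iff the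
set `S` of true nodes contains an `i`–`j` path of length at most `3` in `G[S]`. -/
theorem stmt_15 {V : Type*} (G : SimpleGraph V) (t : V → Bool) (y : V → V → Bool)
    (hy : ∀ r₁ r₂ : V, y r₁ r₂ = true ↔ t r₁ = true ∧ t r₂ = true)
    (i j : V) (hij : i ≠ j) (hadj : ¬ G.Adj i j)
    (hi : t i = true) (hj : t j = true) :
    (t i = false ∨ t j = false ∨
        (∃ r : V, G.Adj i r ∧ G.Adj r j ∧ t r = true) ∨
        (∃ r₁ r₂ : V, r₁ ≠ r₂ ∧ r₁ ≠ i ∧ r₁ ≠ j ∧ r₂ ≠ i ∧ r₂ ≠ j ∧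
          G.Adj i r₁ ∧ G.Adj r₁ r₂ ∧ G.Adj r₂ j ∧ y r₁ r₂ = true)) ↔
      ∃ w : G.Walk i j, w.length ≤ 3 ∧ ∀ v ∈ w.support, t v = true := by
  rw [exists_walk_length_le_three_support_iff]
  simp only [hi, hj, hij, hadj, hy, Bool.true_eq_false, false_or, true_and]
  refine or_congr_right ⟨?_, ?_⟩
  · rintro ⟨r₁, r₂, -, -, -, -, -, h₁, h₂, h₃, hr⟩
    exact ⟨r₁, r₂, h₁, h₂, h₃, hr⟩
  · rintro ⟨r₁, r₂, h₁, h₂, h₃, hr⟩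
    obtain ⟨h₁₂, h₁i, h₁j, h₂i, h₂j⟩ := pairwise_ne_of_adj_adj_adj_of_not_adj hadj h₁ h₂ h₃
    exact ⟨r₁, r₂, h₁₂, h₁i, h₁j, h₂i, h₂j, h₁, h₂, h₃, hr⟩
end
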